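/- arXiv:math-ph/0411018 — 2 statements merged into one kernel-verified Lean document; each statement's English description precedes it below -/
import Mathlib

section
/- For every phase-space point z ∈ ℝ^{2n}: Tr(L(z)^j) = Tr(L̄(z)^j) for every integer 1 ≤ j ≤ n−1, and Tr(L(z)^n) = Tr(L̄(z)^n) + 4n. -/
open Matrix BigOperators

noncomputable def bfun {n : ℕ} [NeZero n] (z : (Fin n → ℝ) × (Fin n → ℝ)) (j : Fin n) : ℝ :=
  Real.exp ((z.1 j - z.1 (j + 1)) / 2)

/-- The Lax matrix `L`. -/
noncomputable def Lax {n : ℕ} [NeZero n] (z : (Fin n → ℝ) × (Fin n → ℝ)) :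
    Matrix (Fin n) (Fin n) ℝ := fun r s =>
  (if r = s then z.2 r else 0) + (if r + 1 = s then bfun z r else 0) +
    (if s + 1 = r then bfun z s else 0)

/-- The sign `σ_r`, equal to `-1` for the index corresponding to `b_n`. -/
noncomputable def sgn {n : ℕ} [NeZero n] (j : Fin n) : ℝ := if j + 1 = 0 then -1 else 1

/-- The Lax matrix `L̄` obtained from `L` by `b_n ↦ -b_n`. -/
noncomputable def LaxBar {n : ℕ} [NeZero n] (z : (Fin n → ℝ) × (Fin n → ℝ)) :
    Matrix (Fin n) (Fin n) ℝ := fun r s =>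
  (if r = s then z.2 r else 0) + (if r + 1 = s then sgn r * bfun z r else 0) +
    (if s + 1 = r then sgn s * bfun z s else 0)

/-- The canonical Poisson bracket on `ℝ^{2n}`. -/
noncomputable def pb {n : ℕ} (f g : (Fin n → ℝ) × (Fin n → ℝ) → ℝ)
    (z : (Fin n → ℝ) × (Fin n → ℝ)) : ℝ :=
  ∑ j : Fin n,
    (fderiv ℝ f z (Pi.single j 1, 0) * fderiv ℝ g z (0, Pi.single j 1) -
     fderiv ℝ f z (0, Pi.single j 1) * fderiv ℝ g z (Pi.single j 1, 0))

/-- The integrals of motion `F_j = (1/j) Tr L^j`. -/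
noncomputable def F {n : ℕ} [NeZero n] (j : ℕ) (z : (Fin n → ℝ) × (Fin n → ℝ)) : ℝ :=
  (1 / j : ℝ) * (Lax z ^ j).trace

/-- The map `F = (F_1, …, F_n) : ℝ^{2n} → ℝ^n`. -/
noncomputable def Fvec {n : ℕ} [NeZero n] (z : (Fin n → ℝ) × (Fin n → ℝ)) : Fin n → ℝ :=
  fun j => F (j.val + 1) z

/-- The corank of `dF(z)`. -/
noncomputable def corank (n : ℕ) [NeZero n] (z : (Fin n → ℝ) × (Fin n → ℝ)) : ℕ :=
  n - Module.finrank ℝ (LinearMap.range (fderiv ℝ (Fvec (n := n)) z).toLinearMap)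

/-- Number of (real) eigenvalues of `A` with two-dimensional eigenspace. -/
noncomputable def nuCount {n : ℕ} (A : Matrix (Fin n) (Fin n) ℝ) : ℕ :=
  {μ : ℝ | Module.finrank ℝ (LinearMap.ker (Matrix.toLin' (A - μ • 1))) = 2}.ncard

/-!
Expand `Tr A ^ j` as a sum, over closed walks `v₀ → v₁ → ⋯ → v_j = v₀` on `Fin n`, of the products
`∏ A v_i v_{i+1}`. For `n ≥ 3` the two matrices have the same support (the `n`-cycle with loops)
and `L̄` is `L` with the sign of the edge joining the last vertex to `0` flipped, so the weight of a
walk in `L̄` is `(-1) ^ w` times its weight in `L`, where `w` is its winding number around the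
cycle. Lifting the steps to `ℤ`, the total lifted displacement is `n * w` and has absolute value at
most `j`. Hence for `j < n` no walk winds, and for `j = n` the only winding walks are the `2n` walks
going once around the cycle, forwards or backwards, from any start; each has `L`-weight
`∏ b_k = 1` and `L̄`-weight `-1`, which accounts for the excess `4n`. For `n = 2` the corner
entry of `L̄` is `b₁ - b₂` rather than a signed copy of `b₁ + b₂`, and the identity is checked
directly.
-/

open Fin.CommRing

lemma Finset.prod_zpow_eq_zpow_sum₀ {ι G₀ : Type*} [CommGroupWithZero G₀] {a : G₀} (ha : a ≠ 0)
    (s : Finset ι) (f : ι → ℤ) : ∏ i ∈ s, a ^ f i = a ^ ∑ i ∈ s, f i := by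
  induction s using Finset.cons_induction with
  | empty => simp
  | cons i s hi ih => rw [Finset.prod_cons, Finset.sum_cons, ih, zpow_add₀ ha]

lemma Fin.sum_succ_sub_castSucc {M : Type*} [AddCommGroup M] {j : ℕ} (f : Fin (j + 1) → M) :
    ∑ i : Fin j, (f i.succ - f i.castSucc) = f (Fin.last j) - f 0 := by
  rw [Finset.sum_sub_distrib, eq_sub_of_add_eq' (Fin.sum_univ_succ f).symm,
    eq_sub_of_add_eq (Fin.sum_univ_castSucc f).symm]
  abel

namespace Fin
variable {n : ℕ} [NeZero n]

lemma val_add_one_eq_ite (hn : 2 ≤ n) (a : Fin n) :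
    (a + 1).val = if a.val + 1 = n then 0 else a.val + 1 := by
  rw [val_add, val_one', Nat.mod_eq_of_lt (by omega : 1 < n)]
  split_ifs with h
  · rw [h, Nat.mod_self]
  · exact Nat.mod_eq_of_lt (by omega)

lemma add_one_ne_self (hn : 2 ≤ n) (a : Fin n) : a + 1 ≠ a := by
  rw [Ne, Fin.ext_iff, val_add_one_eq_ite hn]; split_ifs <;> omega

lemma add_one_add_one_ne_self (hn : 3 ≤ n) (a : Fin n) : a + 1 + 1 ≠ a := by
  rw [Ne, Fin.ext_iff, val_add_one_eq_ite (by omega), val_add_one_eq_ite (by omega)]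
  split_ifs <;> omega

lemma intCast_val_add_one (hn : 2 ≤ n) (a : Fin n) :
    ((a + 1).val : ℤ) = a.val + 1 - n * if a + 1 = 0 then 1 else 0 := by
  simp only [Fin.ext_iff, val_add_one_eq_ite hn, coe_ofNat_eq_mod, Nat.zero_mod]
  split_ifs <;> simp_all
  omega

end Fin

namespace Matrix

variable {ι R : Type*} [Fintype ι] [DecidableEq ι] [CommSemiring R]

def pathWeight (A : Matrix ι ι R) {j : ℕ} (v : Fin (j + 1) → ι) : R :=
  ∏ i : Fin j, A (v i.castSucc) (v i.succ)

omit [Fintype ι] [DecidableEq ι] in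
lemma pathWeight_cons (A : Matrix ι ι R) {j : ℕ} (x : ι) (v : Fin (j + 1) → ι) :
    pathWeight A (Fin.cons x v) = A x (v 0) * pathWeight A v := by
  simp only [pathWeight, Fin.prod_univ_succ, Fin.cons_succ, ← Fin.succ_castSucc]
  rfl

lemma pow_apply_eq_sum_pathWeight (A : Matrix ι ι R) (j : ℕ) (r s : ι) :
    (A ^ j) r s = ∑ v : Fin (j + 1) → ι with v 0 = r ∧ v (Fin.last j) = s, pathWeight A v := by
  induction j generalizing r with
  | zero =>
    by_cases h : r = s
    · subst h
      rw [Finset.sum_filter, ← (Equiv.funUnique (Fin 1) ι).symm.sum_comp]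
      simp [pathWeight]
    · refine (one_apply_ne h).trans (Finset.sum_eq_zero fun v hv => ?_).symm
      obtain ⟨-, hr, hs⟩ := Finset.mem_filter.1 hv
      exact absurd (hr.symm.trans hs) h
  | succ j ih =>
    calc (A ^ (j + 1)) r s = ∑ t, ∑ v : Fin (j + 1) → ι with v (Fin.last j) = s ∧ v 0 = t,
          pathWeight A (Fin.cons r v) := by
          simp only [pow_succ', mul_apply, ih, Finset.mul_sum, pathWeight_cons, and_comm]
          refine Finset.sum_congr rfl fun t _ => Finset.sum_congr rfl fun v hv => ?_
          rw [(Finset.mem_filter.1 hv).2.2]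
      _ = ∑ v : Fin (j + 1) → ι with v (Fin.last j) = s, pathWeight A (Fin.cons r v) := by
          simp only [← Finset.filter_filter]
          exact Finset.sum_fiberwise _ _ _
      _ = _ := by
          refine Finset.sum_nbij' (fun v => Fin.cons r v) Fin.tail ?_ ?_ ?_ ?_ ?_ <;>
            simp [← Fin.succ_last, Fin.tail]
          rintro u rfl -
          exact Fin.cons_self_tail u

lemma trace_pow_eq_sum_pathWeight (A : Matrix ι ι R) (j : ℕ) :
    (A ^ j).trace = ∑ v : Fin (j + 1) → ι with v (Fin.last j) = v 0, pathWeight A v := by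
  rw [trace, ← Finset.sum_fiberwise _ (fun v : Fin (j + 1) → ι => v 0)]
  refine Finset.sum_congr rfl fun r _ => ?_
  rw [diag, pow_apply_eq_sum_pathWeight, Finset.filter_filter]
  refine Finset.sum_congr (Finset.filter_congr fun v _ => ?_) fun _ _ => rfl
  constructor
  · rintro ⟨rfl, h⟩; exact ⟨h, rfl⟩
  · rintro ⟨h, rfl⟩; exact ⟨rfl, h⟩

end Matrix

namespace CycleWalk

variable {n j : ℕ} [NeZero n]

def Adj (a b : Fin n) : Prop := b = a + 1 ∨ a = b + 1 ∨ a = b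

def stepLift (a b : Fin n) : ℤ := if b = a + 1 then 1 else if a = b + 1 then -1 else 0

-- Signed passages through the edge between `-1` and `0`, the one whose sign differs in `LaxBar`.
def crossing (a b : Fin n) : ℤ :=
  if b = a + 1 ∧ b = 0 then 1 else if a = b + 1 ∧ a = 0 then -1 else 0

lemma stepLift_add_one (a : Fin n) : stepLift a (a + 1) = 1 := if_pos rfl

lemma crossing_add_one (hn : 3 ≤ n) (a : Fin n) :
    crossing a (a + 1) = if a + 1 = 0 then 1 else 0 := by
  simp [crossing, (Fin.add_one_add_one_ne_self hn a).symm]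

lemma stepLift_add_one_left (hn : 3 ≤ n) (b : Fin n) : stepLift (b + 1) b = -1 := by
  simp [stepLift, (Fin.add_one_add_one_ne_self hn b).symm]

lemma crossing_add_one_left (hn : 3 ≤ n) (b : Fin n) :
    crossing (b + 1) b = if b + 1 = 0 then -1 else 0 := by
  simp [crossing, (Fin.add_one_add_one_ne_self hn b).symm]

lemma val_eq_of_adj (hn : 3 ≤ n) {a b : Fin n} (h : Adj a b) :
    (b.val : ℤ) = a.val + stepLift a b - n * crossing a b := by
  rcases h with rfl | rfl | rfl
  · rw [stepLift_add_one, crossing_add_one hn, Fin.intCast_val_add_one (by omega)]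
  · rw [stepLift_add_one_left hn, crossing_add_one_left hn, Fin.intCast_val_add_one (by omega)]
    split_ifs <;> ring
  · have h := (Fin.add_one_ne_self (show 2 ≤ n by omega) a).symm
    simp [stepLift, crossing, h]

def winding (v : Fin (j + 1) → Fin n) : ℤ := ∑ i : Fin j, crossing (v i.castSucc) (v i.succ)

def displacement (v : Fin (j + 1) → Fin n) : ℤ := ∑ i : Fin j, stepLift (v i.castSucc) (v i.succ)

def HasStep (e : Fin n) (v : Fin (j + 1) → Fin n) : Prop := ∀ i : Fin j, v i.succ = v i.castSucc + e

instance (e : Fin n) : DecidablePred (HasStep (j := j) e) :=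
  fun _ => Fintype.decidableForallFintype

lemma displacement_eq_mul_winding (hn : 3 ≤ n) {v : Fin (j + 1) → Fin n}
    (hadj : ∀ i : Fin j, Adj (v i.castSucc) (v i.succ)) (hv : v (Fin.last j) = v 0) :
    displacement v = n * winding v := by
  have h := Fin.sum_succ_sub_castSucc fun m => ((v m).val : ℤ)
  rw [hv, sub_self] at h
  rw [displacement, winding, Finset.mul_sum, ← sub_eq_zero, ← Finset.sum_sub_distrib, ← h]
  refine Finset.sum_congr rfl fun i _ => ?_
  rw [val_eq_of_adj hn (hadj i)]
  ring

lemma abs_stepLift_le_one (a b : Fin n) : |stepLift a b| ≤ 1 := by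
  unfold stepLift; split_ifs <;> norm_num

lemma abs_displacement_le (v : Fin (j + 1) → Fin n) : |displacement v| ≤ j := by
  calc |displacement v| ≤ ∑ i : Fin j, |stepLift (v i.castSucc) (v i.succ)| :=
        Finset.abs_sum_le_sum_abs _ _
    _ ≤ ∑ _i : Fin j, 1 := Finset.sum_le_sum fun i _ => abs_stepLift_le_one _ _
    _ = j := by simp

lemma hasStep_one_of_displacement_eq {v : Fin (j + 1) → Fin n} (h : displacement v = j) :
    HasStep 1 v := by
  have hle : ∀ i ∈ (Finset.univ : Finset (Fin j)), stepLift (v i.castSucc) (v i.succ) ≤ 1 :=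
    fun i _ => (abs_le.1 (abs_stepLift_le_one _ _)).2
  have hsum : displacement v = ∑ _i : Fin j, (1 : ℤ) := by simpa using h
  intro i
  have hi := (Finset.sum_eq_sum_iff_of_le hle).1 hsum i (Finset.mem_univ i)
  unfold stepLift at hi
  split_ifs at hi with h1
  · exact h1
  · exact absurd hi (by norm_num)

lemma hasStep_neg_one_of_displacement_eq {v : Fin (j + 1) → Fin n} (h : displacement v = -j) :
    HasStep (-1) v := by
  have hle : ∀ i ∈ (Finset.univ : Finset (Fin j)), (-1 : ℤ) ≤ stepLift (v i.castSucc) (v i.succ) :=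
    fun i _ => (abs_le.1 (abs_stepLift_le_one _ _)).1
  have hsum : ∑ _i : Fin j, (-1 : ℤ) = displacement v := by simpa using h.symm
  intro i
  have hi := (Finset.sum_eq_sum_iff_of_le hle).1 hsum i (Finset.mem_univ i)
  unfold stepLift at hi
  split_ifs at hi with h1 h2
  rw [h2]; ring

lemma displacement_of_hasStep_one {v : Fin (j + 1) → Fin n} (h : HasStep 1 v) :
    displacement v = j := by
  rw [displacement, Finset.sum_congr rfl fun i _ => by rw [h i, stepLift_add_one]]
  simp

lemma displacement_of_hasStep_neg_one (hn : 3 ≤ n) {v : Fin (j + 1) → Fin n}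
    (h : HasStep (-1) v) : displacement v = -j := by
  have hstep (i : Fin j) : v i.castSucc = v i.succ + 1 := by rw [h i]; ring
  rw [displacement, Finset.sum_congr rfl fun i _ => by rw [hstep i, stepLift_add_one_left hn]]
  simp

lemma winding_eq_zero_or_hasStep (hn : 3 ≤ n) (hj : j ≤ n) {v : Fin (j + 1) → Fin n}
    (hadj : ∀ i : Fin j, Adj (v i.castSucc) (v i.succ)) (hv : v (Fin.last j) = v 0) :
    winding v = 0 ∨ j = n ∧ (HasStep 1 v ∨ HasStep (-1) v) := by
  refine or_iff_not_imp_left.2 fun hw => ?_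
  have hd : |displacement v| = n * |winding v| := by
    rw [displacement_eq_mul_winding hn hadj hv, abs_mul, Nat.abs_cast]
  have hnd : (n : ℤ) ≤ |displacement v| := by
    rw [hd]; exact le_mul_of_one_le_right (Nat.cast_nonneg n) (Int.one_le_abs hw)
  have hdj : |displacement v| = j :=
    le_antisymm (abs_displacement_le v) (le_trans (by exact_mod_cast hj) hnd)
  refine ⟨by omega, ?_⟩
  rcases (abs_eq (Nat.cast_nonneg (α := ℤ) j)).1 hdj with h | h
  · exact Or.inl (hasStep_one_of_displacement_eq h)
  · exact Or.inr (hasStep_neg_one_of_displacement_eq h)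

lemma HasStep.apply_eq {e : Fin n} {v : Fin (j + 1) → Fin n} (h : HasStep e v)
    (m : Fin (j + 1)) : v m = v 0 + m.val • e := by
  induction m using Fin.induction with
  | zero => simp
  | succ i ih => rw [h i, ih, Fin.val_succ, succ_nsmul, Fin.val_castSucc, add_assoc]

lemma HasStep.last_eq {e : Fin n} {v : Fin (n + 1) → Fin n} (h : HasStep e v) :
    v (Fin.last n) = v 0 := by
  rw [h.apply_eq (Fin.last n)]
  simp

lemma hasStep_nsmul (c e : Fin n) : HasStep e fun m : Fin (j + 1) => c + m.val • e := by
  intro i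
  simp only [Fin.val_succ, succ_nsmul, Fin.val_castSucc, add_assoc]

open Finset in
lemma card_closed_hasStep (e : Fin n) :
    #{v : Fin (n + 1) → Fin n | v (Fin.last n) = v 0 ∧ HasStep e v} = n := by
  refine (Finset.card_nbij' (fun v => v 0) (fun c m => c + m.val • e) ?_ ?_ ?_ ?_).trans
    (Finset.card_univ.trans (Fintype.card_fin n))
  · simp
  · intro c _
    exact Finset.mem_filter.2 ⟨Finset.mem_univ _, (hasStep_nsmul c e).last_eq, hasStep_nsmul c e⟩
  · intro v hv
    exact funext fun m => ((Finset.mem_filter.1 hv).2.2.apply_eq m).symm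
  · intro c _
    simp

lemma winding_of_hasStep_one (hn : 3 ≤ n) {v : Fin (n + 1) → Fin n} (h : HasStep 1 v) :
    winding v = 1 := by
  have hd := displacement_eq_mul_winding hn (fun i => Or.inl (h i)) h.last_eq
  rw [displacement_of_hasStep_one h] at hd
  exact mul_left_cancel₀ (Nat.cast_ne_zero.2 (NeZero.ne n)) (hd.symm.trans (mul_one _).symm)

lemma winding_of_hasStep_neg_one (hn : 3 ≤ n) {v : Fin (n + 1) → Fin n} (h : HasStep (-1) v) :
    winding v = -1 := by
  have hadj (i : Fin n) : Adj (v i.castSucc) (v i.succ) := Or.inr (Or.inl (by rw [h i]; ring))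
  have hd := displacement_eq_mul_winding hn hadj h.last_eq
  rw [displacement_of_hasStep_neg_one hn h] at hd
  exact mul_left_cancel₀ (Nat.cast_ne_zero.2 (NeZero.ne n)) (hd.symm.trans (mul_neg_one _).symm)

end CycleWalk

section Lax

open CycleWalk Matrix

variable {n j : ℕ} [NeZero n] (z : (Fin n → ℝ) × (Fin n → ℝ))

lemma prod_bfun : ∏ k, bfun z k = 1 := by
  have hshift : ∑ k, z.1 (k + 1) = ∑ k, z.1 k :=
    Fintype.sum_equiv (Equiv.addRight 1) _ _ fun _ => rfl
  simp only [bfun, ← Real.exp_sum, ← Finset.sum_div, Finset.sum_sub_distrib, hshift, sub_self,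
    zero_div, Real.exp_zero]

lemma prod_bfun_add (c : Fin n) : ∏ i, bfun z (c + i) = 1 :=
  (Fintype.prod_equiv (Equiv.addLeft c) _ _ fun _ => rfl).trans (prod_bfun z)

lemma prod_bfun_sub (c : Fin n) : ∏ i, bfun z (c - i) = 1 :=
  (Fintype.prod_equiv (Equiv.subLeft c) _ _ fun _ => rfl).trans (prod_bfun z)

variable {z}

lemma Lax_eq_zero_of_not_adj {a b : Fin n} (h : ¬Adj a b) : Lax z a b = 0 := by
  simp only [Adj, not_or] at h
  simp [Lax, h.2.2, Ne.symm h.1, Ne.symm h.2.1]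

lemma Lax_add_one (hn : 3 ≤ n) (a : Fin n) : Lax z a (a + 1) = bfun z a := by
  simp [Lax, (Fin.add_one_ne_self (by omega) a).symm, Fin.add_one_add_one_ne_self hn a]

lemma Lax_add_one_left (hn : 3 ≤ n) (b : Fin n) : Lax z (b + 1) b = bfun z b := by
  simp [Lax, Fin.add_one_ne_self (by omega) b, Fin.add_one_add_one_ne_self hn b]

lemma LaxBar_eq_zpow_crossing_mul (hn : 3 ≤ n) (a b : Fin n) :
    LaxBar z a b = (-1) ^ crossing a b * Lax z a b := by
  by_cases h : Adj a b
  · rcases h with rfl | rfl | rfl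
    · rw [crossing_add_one hn, Lax_add_one hn]
      simp [LaxBar, sgn, (Fin.add_one_ne_self (by omega) a).symm, Fin.add_one_add_one_ne_self hn a]
    · rw [crossing_add_one_left hn, Lax_add_one_left hn]
      simp [LaxBar, sgn, Fin.add_one_ne_self (by omega) b, Fin.add_one_add_one_ne_self hn b]
    · simp [LaxBar, Lax, crossing, show n ≠ 1 by omega]
  · have h' := h
    simp only [Adj, not_or] at h'
    simp [LaxBar, Lax_eq_zero_of_not_adj h, h'.2.2, Ne.symm h'.1, Ne.symm h'.2.1]

lemma adj_of_pathWeight_Lax_ne_zero {v : Fin (j + 1) → Fin n} (h : pathWeight (Lax z) v ≠ 0)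
    (i : Fin j) : Adj (v i.castSucc) (v i.succ) := by
  by_contra hi
  exact h (Finset.prod_eq_zero (Finset.mem_univ i) (Lax_eq_zero_of_not_adj hi))

lemma pathWeight_LaxBar (hn : 3 ≤ n) (v : Fin (j + 1) → Fin n) :
    pathWeight (LaxBar z) v = (-1) ^ winding v * pathWeight (Lax z) v := by
  simp only [pathWeight, winding, LaxBar_eq_zpow_crossing_mul hn, Finset.prod_mul_distrib,
    Finset.prod_zpow_eq_zpow_sum₀ (neg_ne_zero.2 (one_ne_zero (α := ℝ)))]

lemma pathWeight_Lax_of_hasStep_one (hn : 3 ≤ n) {v : Fin (n + 1) → Fin n} (h : HasStep 1 v) :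
    pathWeight (Lax z) v = 1 := by
  have hv (i : Fin n) : v i.castSucc = v 0 + i := by rw [h.apply_eq]; simp
  simp only [pathWeight, h _, Lax_add_one hn, hv, prod_bfun_add]

lemma pathWeight_Lax_of_hasStep_neg_one (hn : 3 ≤ n) {v : Fin (n + 1) → Fin n}
    (h : HasStep (-1) v) : pathWeight (Lax z) v = 1 := by
  have hv (i : Fin n) : v i.castSucc = v i.succ + 1 := by rw [h i]; ring
  have hv' (i : Fin n) : v i.succ = (v 0 - 1) - i := by
    rw [h.apply_eq]
    simp only [Fin.val_succ, smul_neg, nsmul_eq_mul, Nat.cast_add, Fin.cast_val_eq_self,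
      Nat.cast_one, mul_one]
    ring
  simp only [pathWeight, hv, Lax_add_one_left hn, hv', prod_bfun_sub]

lemma pathWeight_LaxBar_eq_of_not_hasStep (hn : 3 ≤ n) (hj : j ≤ n) {v : Fin (j + 1) → Fin n}
    (hv : v (Fin.last j) = v 0) (hstep : ¬(j = n ∧ (HasStep 1 v ∨ HasStep (-1) v))) :
    pathWeight (LaxBar z) v = pathWeight (Lax z) v := by
  rw [pathWeight_LaxBar hn]
  rcases eq_or_ne (pathWeight (Lax z) v) 0 with h0 | h0
  · rw [h0, mul_zero]
  · rw [(winding_eq_zero_or_hasStep hn hj (adj_of_pathWeight_Lax_ne_zero h0) hv).resolve_right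
      hstep, zpow_zero, one_mul]

lemma pathWeight_Lax_eq_LaxBar_add (hn : 3 ≤ n) {v : Fin (n + 1) → Fin n}
    (hv : v (Fin.last n) = v 0) :
    pathWeight (Lax z) v = pathWeight (LaxBar z) v +
      ((if HasStep 1 v then 2 else 0) + if HasStep (-1) v then 2 else 0) := by
  by_cases h₁ : HasStep 1 v
  · have h₂ : ¬HasStep (-1) v := fun h₂ => by
      have := (winding_of_hasStep_one hn h₁).symm.trans (winding_of_hasStep_neg_one hn h₂)
      norm_num at this
    rw [pathWeight_LaxBar hn, winding_of_hasStep_one hn h₁, pathWeight_Lax_of_hasStep_one hn h₁,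
      if_pos h₁, if_neg h₂]
    norm_num
  by_cases h₂ : HasStep (-1) v
  · rw [pathWeight_LaxBar hn, winding_of_hasStep_neg_one hn h₂,
      pathWeight_Lax_of_hasStep_neg_one hn h₂, if_neg h₁, if_pos h₂]
    norm_num
  rw [if_neg h₁, if_neg h₂, add_zero, add_zero,
    pathWeight_LaxBar_eq_of_not_hasStep hn le_rfl hv fun h => h.2.elim h₁ h₂]

theorem trace_pow_Lax_eq_of_lt (hn : 3 ≤ n) (hj : j < n) :
    (Lax z ^ j).trace = (LaxBar z ^ j).trace := by
  rw [trace_pow_eq_sum_pathWeight, trace_pow_eq_sum_pathWeight]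
  refine Finset.sum_congr rfl fun v hv => ?_
  exact (pathWeight_LaxBar_eq_of_not_hasStep hn hj.le (Finset.mem_filter.1 hv).2
    fun h => hj.ne h.1).symm

open Finset in
lemma sum_closed_ite_hasStep (e : Fin n) (c : ℝ) :
    ∑ v : Fin (n + 1) → Fin n with v (Fin.last n) = v 0, (if HasStep e v then c else 0) =
      n * c := by
  rw [Finset.sum_ite, Finset.sum_const_zero, add_zero, Finset.sum_const, Finset.filter_filter,
    card_closed_hasStep, nsmul_eq_mul]

theorem trace_pow_Lax_self (hn : 3 ≤ n) :
    (Lax z ^ n).trace = (LaxBar z ^ n).trace + 4 * n := by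
  rw [trace_pow_eq_sum_pathWeight, trace_pow_eq_sum_pathWeight,
    Finset.sum_congr rfl fun v hv => pathWeight_Lax_eq_LaxBar_add hn (Finset.mem_filter.1 hv).2,
    Finset.sum_add_distrib, Finset.sum_add_distrib, sum_closed_ite_hasStep, sum_closed_ite_hasStep]
  ring

end Lax

section FinTwo

variable (z : (Fin 2 → ℝ) × (Fin 2 → ℝ))

lemma Lax_fin_two :
    Lax z = !![z.2 0, bfun z 0 + bfun z 1; bfun z 0 + bfun z 1, z.2 1] := by
  ext i k; fin_cases i <;> fin_cases k <;> simp [Lax, add_comm]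

lemma LaxBar_fin_two :
    LaxBar z = !![z.2 0, bfun z 0 - bfun z 1; bfun z 0 - bfun z 1, z.2 1] := by
  ext i k; fin_cases i <;> fin_cases k <;> simp [LaxBar, sgn] <;> ring

lemma trace_sq_Lax_fin_two : (Lax z ^ 2).trace = (LaxBar z ^ 2).trace + 4 * 2 := by
  have hb : bfun z 0 * bfun z 1 = 1 := by simpa using prod_bfun z
  rw [Lax_fin_two, LaxBar_fin_two, sq, sq, Matrix.mul_fin_two, Matrix.mul_fin_two,
    Matrix.trace_fin_two_of, Matrix.trace_fin_two_of]
  linear_combination 8 * hb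

end FinTwo

/-- Tr L^j = Tr L̄^j for 1 ≤ j ≤ n−1, and Tr L^n = Tr L̄^n + 4n. -/
theorem stmt2 (n : ℕ) [NeZero n] (hn : 2 ≤ n) (z : (Fin n → ℝ) × (Fin n → ℝ)) :
    (∀ j : ℕ, 1 ≤ j → j ≤ n - 1 → (Lax z ^ j).trace = (LaxBar z ^ j).trace) ∧
    (Lax z ^ n).trace = (LaxBar z ^ n).trace + 4 * n := by
  rcases hn.eq_or_lt with rfl | hn
  · refine ⟨fun j hj₁ hj => ?_, by exact_mod_cast trace_sq_Lax_fin_two z⟩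
    obtain rfl : j = 1 := by omega
    rw [pow_one, pow_one, Lax_fin_two, LaxBar_fin_two, Matrix.trace_fin_two_of,
      Matrix.trace_fin_two_of]
  · exact ⟨fun j _ hj => trace_pow_Lax_eq_of_lt hn (by omega), trace_pow_Lax_self hn⟩
end

section
/- Let ε, σ ∈ {−1, +1}^n, and fix a phase-space point z_* ∈ ℝ^{2n}, real numbers λ, μ, and vectors u, v, w, x ∈ ℝ^n satisfying L^ε(z_*)u = λu, L^ε(z_*)v = λv, L^σ(z_*)w = μw and L^σ(z_*)x = μx. Define smooth functions f, g : ℝ^{2n} → ℝ by f(z) = uᵀ L^ε(z) v and g(z) = wᵀ L^σ(z) x. If λ ≠ μ, or if Π_{m=1}^n ε_m σ_m = −1, then the Poisson bracket {f, g} vanishes at z_*: {f, g}(z_*) = 0. -/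
open Matrix BigOperators

/-- The Lax matrix with signs ε. -/
noncomputable def Leps {n : ℕ} [NeZero n] (ε : Fin n → ℝ)
    (z : (Fin n → ℝ) × (Fin n → ℝ)) : Matrix (Fin n) (Fin n) ℝ := fun r s =>
  (if r = s then z.2 r else 0) + (if r + 1 = s then ε r * bfun z r else 0) +
    (if s + 1 = r then ε s * bfun z s else 0)

/-!
Put `α_j = ε_j b_j (u_j v_{j+1} + u_{j+1} v_j)`, `β_j = σ_j b_j (w_j x_{j+1} + w_{j+1} x_j)`
and `Z = Σ_j u_j v_j w_j x_j`. Since `∂_{p_j} f = u_j v_j` and `∂_{q_j} f = (α_j - α_{j-1}) / 2`,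
and the eigenvalue equations give `α_j + α_{j-1} = 2 (λ - p_j) u_j v_j`, one finds
`{f, g} = (λ - μ) Z - Y` with `Y = Σ_j (α_j w_{j+1} x_{j+1} - β_j u_{j+1} v_{j+1})`.

The cross Wronskians `W_j = ε_j b_j u_{j+1} w_j - σ_j b_j u_j w_{j+1}` of the two spectral
problems obey `W_{j+1} = ε_j σ_j W_j + (λ - μ) u_{j+1} w_{j+1}`. Multiplying the recursions for
`(u, w)` and `(v, x)` and summing around the cycle, the squares cancel and `-Y` appears as the
cross term, so `(λ - μ) (Y - (λ - μ) Z) = 0`. If `λ = μ`, the recursion is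
`W_{j+1} = ε_j σ_j W_j`, and going once around the cycle multiplies `W` by `Π_m ε_m σ_m = -1`;
hence all Wronskians vanish and `Y = 0`.
-/

section

variable {n : ℕ} [NeZero n]

theorem Fin.sum_comp_add_one {M : Type*} [AddCommMonoid M] (f : Fin n → M) :
    ∑ j, f (j + 1) = ∑ j, f j :=
  Equiv.sum_comp (Equiv.addRight 1) f

open Fin.NatCast in
theorem Fin.apply_eq_prod_mul_of_apply_add_one {M : Type*} [CommMonoid M] {h D : Fin n → M}
    (hD : ∀ j, D (j + 1) = h j * D j) (j : Fin n) : D j = (∏ m, h m) * D j := by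
  have hstep : ∀ k : ℕ, D (j + k) = (∏ i ∈ Finset.range k, h (j + i)) * D j := by
    intro k
    induction k with
    | zero => simp
    | succ k ih =>
      rw [Nat.cast_succ, ← add_assoc, hD, ih, Finset.prod_range_succ, mul_comm _ (h _), mul_assoc]
  have hcycle : ∏ i ∈ Finset.range n, h (j + i) = ∏ m, h m := by
    rw [← Fin.prod_univ_eq_prod_range (fun i => h (j + i))]
    simp only [Fin.cast_val_eq_self]
    exact Equiv.prod_comp (Equiv.addLeft j) h
  simpa [hcycle] using hstep n

def jacobi (p e : Fin n → ℝ) : Matrix (Fin n) (Fin n) ℝ := fun r s =>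
  (if r = s then p r else 0) + (if r + 1 = s then e r else 0) + (if s + 1 = r then e s else 0)

theorem Leps_eq_jacobi (ε : Fin n → ℝ) (z : (Fin n → ℝ) × (Fin n → ℝ)) :
    Leps ε z = jacobi z.2 (ε * bfun z) := rfl

theorem jacobi_mulVec_apply (p e u : Fin n → ℝ) (j : Fin n) :
    (jacobi p e *ᵥ u) j = p j * u j + e j * u (j + 1) + e (j - 1) * u (j - 1) := by
  have hpred : ∀ s : Fin n, (s + 1 = j) = (s = j - 1) := fun s => propext eq_sub_iff_add_eq.symm
  simp only [mulVec, dotProduct, jacobi, hpred, add_mul, ite_mul, zero_mul,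
    Finset.sum_add_distrib, Finset.sum_ite_eq, Finset.sum_ite_eq', Finset.mem_univ, if_true]

def bond (e u v : Fin n → ℝ) (j : Fin n) : ℝ := e j * (u j * v (j + 1) + u (j + 1) * v j)

theorem dotProduct_jacobi_mulVec (p e u v : Fin n → ℝ) :
    u ⬝ᵥ (jacobi p e *ᵥ v) = ∑ j, (p j * (u j * v j) + bond e u v j) := by
  have hshift : ∑ j, u j * (e (j - 1) * v (j - 1)) = ∑ j, u (j + 1) * (e j * v j) := by
    simpa using (Fin.sum_comp_add_one fun j => u j * (e (j - 1) * v (j - 1))).symm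
  simp only [dotProduct, jacobi_mulVec_apply, mul_add, Finset.sum_add_distrib, hshift]
  rw [← Finset.sum_add_distrib, ← Finset.sum_add_distrib, ← Finset.sum_add_distrib]
  exact Finset.sum_congr rfl fun j _ => by simp only [bond]; ring

variable {p e s u v w x : Fin n → ℝ} {lam mu : ℝ}

theorem bond_add_bond_sub_one (hu : jacobi p e *ᵥ u = lam • u) (hv : jacobi p e *ᵥ v = lam • v)
    (j : Fin n) : bond e u v j + bond e u v (j - 1) = 2 * (lam - p j) * (u j * v j) := by
  have hu' := congrFun hu j
  have hv' := congrFun hv j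
  simp only [jacobi_mulVec_apply, Pi.smul_apply, smul_eq_mul] at hu' hv'
  simp only [bond, sub_add_cancel]
  linear_combination v j * hu' + u j * hv'

def wronskian (e s u w : Fin n → ℝ) (j : Fin n) : ℝ := e j * u (j + 1) * w j - s j * u j * w (j + 1)

theorem wronskian_add_one (hu : jacobi p e *ᵥ u = lam • u) (hw : jacobi p s *ᵥ w = mu • w)
    (j : Fin n) :
    wronskian e s u w (j + 1) = wronskian s e u w j + (lam - mu) * (u (j + 1) * w (j + 1)) := by
  have hu' := congrFun hu (j + 1)
  have hw' := congrFun hw (j + 1)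
  simp only [jacobi_mulVec_apply, Pi.smul_apply, smul_eq_mul, add_sub_cancel_right] at hu' hw'
  simp only [wronskian]
  linear_combination w (j + 1) * hu' - u (j + 1) * hw'

theorem wronskian_swap {ε σ b : Fin n → ℝ} (hε : ∀ m, ε m * ε m = 1) (hσ : ∀ m, σ m * σ m = 1)
    (j : Fin n) :
    wronskian (σ * b) (ε * b) u w j = ε j * σ j * wronskian (ε * b) (σ * b) u w j := by
  simp only [wronskian, Pi.mul_apply]
  linear_combination (-(σ j * b j * u (j + 1) * w j)) * hε j + ε j * b j * u j * w (j + 1) * hσ j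

theorem bond_mul_sub_bond_mul_eq_neg_wronskian (j : Fin n) :
    bond e u v j * (w (j + 1) * x (j + 1)) - bond s w x j * (u (j + 1) * v (j + 1)) =
      -(u (j + 1) * w (j + 1) * wronskian s e v x j +
        v (j + 1) * x (j + 1) * wronskian s e u w j) := by
  simp only [bond, wronskian]
  ring

theorem wronskian_eq_zero_of_prod_eq_neg_one {ε σ b : Fin n → ℝ} (hε : ∀ m, ε m * ε m = 1)
    (hσ : ∀ m, σ m * σ m = 1) (hu : jacobi p (ε * b) *ᵥ u = lam • u)
    (hw : jacobi p (σ * b) *ᵥ w = lam • w) (hprod : ∏ m, ε m * σ m = -1) (j : Fin n) :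
    wronskian (ε * b) (σ * b) u w j = 0 := by
  have hrec : ∀ j, wronskian (ε * b) (σ * b) u w (j + 1) =
      ε j * σ j * wronskian (ε * b) (σ * b) u w j := fun j => by
    rw [wronskian_add_one hu hw, sub_self, zero_mul, add_zero, wronskian_swap hε hσ]
  have hmono := Fin.apply_eq_prod_mul_of_apply_add_one hrec j
  rw [hprod] at hmono
  linarith

section Bracket

variable {ε σ b : Fin n → ℝ} (hε : ∀ m, ε m * ε m = 1) (hσ : ∀ m, σ m * σ m = 1)
  (hu : jacobi p (ε * b) *ᵥ u = lam • u) (hv : jacobi p (ε * b) *ᵥ v = lam • v)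
  (hw : jacobi p (σ * b) *ᵥ w = mu • w) (hx : jacobi p (σ * b) *ᵥ x = mu • x)
include hε hσ hu hv hw hx

theorem sum_bond_mul_sub_bond_mul_eq_of_ne (hne : lam ≠ mu) :
    ∑ j, (bond (ε * b) u v j * (w (j + 1) * x (j + 1)) -
      bond (σ * b) w x j * (u (j + 1) * v (j + 1))) =
        (lam - mu) * ∑ j, u j * v j * (w j * x j) := by
  have hstep : ∀ j, wronskian (ε * b) (σ * b) u w (j + 1) * wronskian (ε * b) (σ * b) v x (j + 1) -
      wronskian (ε * b) (σ * b) u w j * wronskian (ε * b) (σ * b) v x j =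
      -(lam - mu) * (bond (ε * b) u v j * (w (j + 1) * x (j + 1)) -
        bond (σ * b) w x j * (u (j + 1) * v (j + 1))) +
      (lam - mu) ^ 2 * (u (j + 1) * v (j + 1) * (w (j + 1) * x (j + 1))) := fun j => by
    rw [wronskian_add_one hu hw, wronskian_add_one hv hx, bond_mul_sub_bond_mul_eq_neg_wronskian,
      wronskian_swap hε hσ, wronskian_swap hε hσ]
    linear_combination wronskian (ε * b) (σ * b) u w j * wronskian (ε * b) (σ * b) v x j *
      (σ j * σ j * hε j + hσ j)
  have htel := Finset.sum_congr rfl fun j (_ : j ∈ Finset.univ) => hstep j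
  rw [Finset.sum_sub_distrib, Fin.sum_comp_add_one fun j =>
      wronskian (ε * b) (σ * b) u w j * wronskian (ε * b) (σ * b) v x j,
    sub_self, Finset.sum_add_distrib, ← Finset.mul_sum, ← Finset.mul_sum,
    Fin.sum_comp_add_one fun j => u j * v j * (w j * x j)] at htel
  refine mul_left_cancel₀ (sub_ne_zero.mpr hne) ?_
  linear_combination htel

theorem sum_bond_mul_sub_bond_mul_eq (hcase : lam ≠ mu ∨ ∏ m, ε m * σ m = -1) :
    ∑ j, (bond (ε * b) u v j * (w (j + 1) * x (j + 1)) -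
      bond (σ * b) w x j * (u (j + 1) * v (j + 1))) =
        (lam - mu) * ∑ j, u j * v j * (w j * x j) := by
  rcases eq_or_ne lam mu with rfl | hne
  · have hprod := hcase.resolve_left (not_not_intro rfl)
    rw [sub_self, zero_mul]
    refine Finset.sum_eq_zero fun j _ => ?_
    rw [bond_mul_sub_bond_mul_eq_neg_wronskian, wronskian_swap hε hσ, wronskian_swap hε hσ,
      wronskian_eq_zero_of_prod_eq_neg_one hε hσ hu hw hprod,
      wronskian_eq_zero_of_prod_eq_neg_one hε hσ hv hx hprod]
    ring
  · exact sum_bond_mul_sub_bond_mul_eq_of_ne hε hσ hu hv hw hx hne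

theorem sum_bond_sub_mul_sub_mul_bond_sub_eq_zero (hcase : lam ≠ mu ∨ ∏ m, ε m * σ m = -1) :
    ∑ j, ((bond (ε * b) u v j - bond (ε * b) u v (j - 1)) * (w j * x j) -
      u j * v j * (bond (σ * b) w x j - bond (σ * b) w x (j - 1))) = 0 := by
  have hpt : ∀ j, (bond (ε * b) u v j - bond (ε * b) u v (j - 1)) * (w j * x j) -
      u j * v j * (bond (σ * b) w x j - bond (σ * b) w x (j - 1)) =
      2 * ((lam - mu) * (u j * v j * (w j * x j)) - (bond (ε * b) u v (j - 1) * (w j * x j) -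
        bond (σ * b) w x (j - 1) * (u j * v j))) := fun j => by
    linear_combination (w j * x j) * bond_add_bond_sub_one hu hv j -
      (u j * v j) * bond_add_bond_sub_one hw hx j
  rw [Finset.sum_congr rfl fun j _ => hpt j, ← Finset.mul_sum, Finset.sum_sub_distrib,
    ← Finset.mul_sum, ← Fin.sum_comp_add_one fun j =>
      bond (ε * b) u v (j - 1) * (w j * x j) - bond (σ * b) w x (j - 1) * (u j * v j)]
  simp only [add_sub_cancel_right]
  rw [sum_bond_mul_sub_bond_mul_eq hε hσ hu hv hw hx hcase, sub_self, mul_zero]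

end Bracket

theorem bond_mul (e b u v : Fin n → ℝ) (j : Fin n) : bond (e * b) u v j = bond e u v j * b j := by
  simp only [bond, Pi.mul_apply]
  ring

theorem dotProduct_Leps_mulVec (ε u v : Fin n → ℝ) :
    (fun y => u ⬝ᵥ (Leps ε y *ᵥ v)) =
      fun y => ∑ r, (u r * v r * y.2 r + bond ε u v r * bfun y r) := by
  funext y
  rw [Leps_eq_jacobi, dotProduct_jacobi_mulVec]
  exact Finset.sum_congr rfl fun r _ => by rw [bond_mul, mul_comm (y.2 r)]

section Derivative

variable (n) in
noncomputable def momentumCoord (r : Fin n) : ((Fin n → ℝ) × (Fin n → ℝ)) →L[ℝ] ℝ :=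
  (ContinuousLinearMap.proj (R := ℝ) (φ := fun _ : Fin n => ℝ) r).comp
    (ContinuousLinearMap.snd ℝ (Fin n → ℝ) (Fin n → ℝ))

variable (n) in
noncomputable def bondExponent (r : Fin n) : ((Fin n → ℝ) × (Fin n → ℝ)) →L[ℝ] ℝ :=
  (2⁻¹ : ℝ) • (ContinuousLinearMap.proj (R := ℝ) (φ := fun _ : Fin n => ℝ) r -
    ContinuousLinearMap.proj (r + 1)).comp (ContinuousLinearMap.fst ℝ (Fin n → ℝ) (Fin n → ℝ))

theorem bondExponent_apply (r : Fin n) (y : (Fin n → ℝ) × (Fin n → ℝ)) :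
    bondExponent n r y = (y.1 r - y.1 (r + 1)) / 2 := by
  simp [bondExponent, div_eq_inv_mul]

theorem exp_bondExponent (r : Fin n) (y : (Fin n → ℝ) × (Fin n → ℝ)) :
    Real.exp (bondExponent n r y) = bfun y r := by
  rw [bondExponent_apply, bfun]

theorem hasFDerivAt_momentum_bond_sum (d c : Fin n → ℝ) (z : (Fin n → ℝ) × (Fin n → ℝ)) :
    HasFDerivAt (fun y => ∑ r, (d r * y.2 r + c r * bfun y r))
      (∑ r, (d r • momentumCoord n r + (c r * bfun z r) • bondExponent n r)) z := by
  refine HasFDerivAt.fun_sum fun r _ => ?_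
  refine ((momentumCoord n r).hasFDerivAt.const_mul (d r)).add ?_
  have hexp := (bondExponent n r).hasFDerivAt.exp (x := z)
  simp only [exp_bondExponent] at hexp
  simpa only [smul_smul] using hexp.const_mul (c r)

theorem fderiv_momentum_bond_sum_apply_momentum (d c : Fin n → ℝ) (z : (Fin n → ℝ) × (Fin n → ℝ))
    (j : Fin n) :
    fderiv ℝ (fun y => ∑ r, (d r * y.2 r + c r * bfun y r)) z (0, Pi.single j 1) = d j := by
  rw [(hasFDerivAt_momentum_bond_sum d c z).fderiv]
  simp [momentumCoord, bondExponent_apply, Pi.single_apply]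

theorem fderiv_momentum_bond_sum_apply_position (d c : Fin n → ℝ) (z : (Fin n → ℝ) × (Fin n → ℝ))
    (j : Fin n) :
    fderiv ℝ (fun y => ∑ r, (d r * y.2 r + c r * bfun y r)) z (Pi.single j 1, 0) =
      (c j * bfun z j - c (j - 1) * bfun z (j - 1)) / 2 := by
  have hpred : ∀ r : Fin n, (r + 1 = j) = (r = j - 1) := fun r => propext eq_sub_iff_add_eq.symm
  rw [(hasFDerivAt_momentum_bond_sum d c z).fderiv]
  simp [momentumCoord, bondExponent_apply, Pi.single_apply, hpred, mul_sub, sub_div,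
    Finset.sum_sub_distrib, ite_div]
  ring

end Derivative

end

theorem stmt14_general (n : ℕ) [NeZero n] (ε σ : Fin n → ℝ)
    (hε : ∀ m, ε m = 1 ∨ ε m = -1) (hσ : ∀ m, σ m = 1 ∨ σ m = -1)
    (z : (Fin n → ℝ) × (Fin n → ℝ)) (lam mu : ℝ) (u v w x : Fin n → ℝ)
    (hu : Leps ε z *ᵥ u = lam • u) (hv : Leps ε z *ᵥ v = lam • v)
    (hw : Leps σ z *ᵥ w = mu • w) (hx : Leps σ z *ᵥ x = mu • x)
    (hcase : lam ≠ mu ∨ ∏ m : Fin n, ε m * σ m = -1) :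
    pb (fun y => u ⬝ᵥ (Leps ε y *ᵥ v)) (fun y => w ⬝ᵥ (Leps σ y *ᵥ x)) z = 0 := by
  have hsq : ∀ {τ : Fin n → ℝ}, (∀ m, τ m = 1 ∨ τ m = -1) → ∀ m, τ m * τ m = 1 := fun hτ m => by
    rcases hτ m with h | h <;> norm_num [h]
  rw [Leps_eq_jacobi] at hu hv hw hx
  have hsum := sum_bond_sub_mul_sub_mul_bond_sub_eq_zero (hsq hε) (hsq hσ) hu hv hw hx hcase
  calc pb (fun y => u ⬝ᵥ (Leps ε y *ᵥ v)) (fun y => w ⬝ᵥ (Leps σ y *ᵥ x)) z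
      = 2⁻¹ * ∑ j, ((bond (ε * bfun z) u v j - bond (ε * bfun z) u v (j - 1)) * (w j * x j) -
          u j * v j * (bond (σ * bfun z) w x j - bond (σ * bfun z) w x (j - 1))) := by
        simp only [pb, dotProduct_Leps_mulVec, fderiv_momentum_bond_sum_apply_momentum,
          fderiv_momentum_bond_sum_apply_position, bond_mul, Finset.mul_sum]
        exact Finset.sum_congr rfl fun j _ => by ring
    _ = 0 := by rw [hsum, mul_zero]

/-- if λ ≠ μ or Π ε_m σ_m = −1, the Poisson bracket of the
spectral components vanishes at z_*. -/
theorem stmt14 (n : ℕ) [NeZero n] (hn : 2 ≤ n) (ε σ : Fin n → ℝ)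
    (hε : ∀ m, ε m = 1 ∨ ε m = -1) (hσ : ∀ m, σ m = 1 ∨ σ m = -1)
    (z : (Fin n → ℝ) × (Fin n → ℝ)) (lam mu : ℝ) (u v w x : Fin n → ℝ)
    (hu : Leps ε z *ᵥ u = lam • u) (hv : Leps ε z *ᵥ v = lam • v)
    (hw : Leps σ z *ᵥ w = mu • w) (hx : Leps σ z *ᵥ x = mu • x)
    (hcase : lam ≠ mu ∨ ∏ m : Fin n, ε m * σ m = -1) :
    pb (fun y => u ⬝ᵥ (Leps ε y *ᵥ v)) (fun y => w ⬝ᵥ (Leps σ y *ᵥ x)) z = 0 :=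
  stmt14_general n ε σ hε hσ z lam mu u v w x hu hv hw hx hcase
end
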